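/- arXiv:1809.10662 — 2 statements merged into one kernel-verified Lean document; each statement's English description precedes it below -/
import Mathlib

section
/- The extension closure ⟨C_00, C_20⟩ of the 0-dimensional sheaves together with the 1-dimensional sheaves with horizontal support is a torsion class in Coh(X). -/
/-!
A framework for torsion theory computations on elliptic threefolds
(following Angeles–Lo–van der Linden).

We axiomatize the setting of a Weierstraß elliptic threefold `π : X → B`:
`𝒜` plays the role of the abelian category `Coh(X)`, `D` plays the role of
the bounded derived category `D^b(Coh(X))` (a category with a shift by `ℤ`),
`ι : 𝒜 ⥤ D` is the canonical embedding, `Φ, Φhat` are the relative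
Fourier–Mukai autoequivalences, `dim E` is the dimension of `supp E`,
`fdim E` is the dimension of `π(supp E)`, `hat` is the Fourier–Mukai
transform of a WIT sheaf, `C20` is the class of pure 1-dimensional sheaves
with horizontal support, and `ch` is the Chern character (as a 2 × 3 integer
matrix, for the product threefold `X = C × B`).

The paper's `Properties' (D0–D3, Z1–Z2, A1–A4, TC1–TC3, C0–C1, CH0p–CH3p,
A4p) are encoded in the axiom structures `EllipticAxioms` (general
Weierstraß threefolds) and `ProductAxioms` (the product of an elliptic
curve and a K3 surface of Picard rank one).
-/

open CategoryTheory CategoryTheory.Limits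

universe v v' u u'

namespace EllipticFramework

variable {𝒜 : Type u} [Category.{v} 𝒜] [Abelian 𝒜]

/-- `(f, g)` form a short exact sequence `0 → A → B → C → 0`. -/
def IsShortExact {A B C : 𝒜} (f : A ⟶ B) (g : B ⟶ C) : Prop :=
  ∃ w : f ≫ g = 0, (ShortComplex.mk f g w).ShortExact

/-- `E'` is a quotient of `E` (in the abelian category). -/
def IsQuotient (E E' : 𝒜) : Prop := ∃ f : E ⟶ E', Epi f

/-- The extension closure `⟨T⟩` of a class of objects `T`: the smallest class of
objects containing `T` and the zero objects and closed under extensions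
(hence the object class of the smallest extension-closed full subcategory
containing `T`). -/
inductive ExtClosure (T : Set 𝒜) : 𝒜 → Prop
  | of {E : 𝒜} (hE : E ∈ T) : ExtClosure T E
  | zero {E : 𝒜} (hE : IsZero E) : ExtClosure T E
  | ext {A B C : 𝒜} (f : A ⟶ B) (g : B ⟶ C) (hfg : IsShortExact f g)
      (hA : ExtClosure T A) (hC : ExtClosure T C) : ExtClosure T B

/-- `Hom(T, F) = 0`. -/
def HomOrth (T F : Set 𝒜) : Prop :=
  ∀ ⦃A : 𝒜⦄, A ∈ T → ∀ ⦃B : 𝒜⦄, B ∈ F → ∀ f : A ⟶ B, f = 0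

/-- `(T, F)` is a torsion pair: `Hom(T, F) = 0` and every object `E` fits in a
short exact sequence `0 → A → E → C → 0` with `A ∈ T` and `C ∈ F`. -/
def IsTorsionPair (T F : Set 𝒜) : Prop :=
  HomOrth T F ∧
    ∀ E : 𝒜, ∃ (A C : 𝒜) (f : A ⟶ E) (g : E ⟶ C),
      A ∈ T ∧ C ∈ F ∧ IsShortExact f g

/-- `T` is a torsion class, i.e. the first member of some torsion pair. -/
def IsTorsionClass (T : Set 𝒜) : Prop := ∃ F : Set 𝒜, IsTorsionPair T F

/-- `(T, F)` is a torsion pair in the full (Serre, hence abelian) subcategory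
whose objects are the class `𝒮`. -/
def IsTorsionPairIn (𝒮 T F : Set 𝒜) : Prop :=
  T ⊆ 𝒮 ∧ F ⊆ 𝒮 ∧ HomOrth T F ∧
    ∀ E ∈ 𝒮, ∃ (A C : 𝒜) (f : A ⟶ E) (g : E ⟶ C),
      A ∈ T ∧ C ∈ F ∧ IsShortExact f g

/-- `T` is a torsion class in the full subcategory with object class `𝒮`. -/
def IsTorsionClassIn (𝒮 T : Set 𝒜) : Prop := ∃ F : Set 𝒜, IsTorsionPairIn 𝒮 T F

/-- `T` is (the object class of) a Serre subcategory: for every short exact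
sequence `0 → A → B → C → 0`, `B ∈ T` iff both `A ∈ T` and `C ∈ T`. -/
def IsSerre (T : Set 𝒜) : Prop :=
  ∀ {A B C : 𝒜} (f : A ⟶ B) (g : B ⟶ C), IsShortExact f g →
    (B ∈ T ↔ A ∈ T ∧ C ∈ T)

/-- The data of the elliptic-threefold framework. -/
structure EllipticData (𝒜 : Type u) (D : Type u') [Category.{v} 𝒜] [Abelian 𝒜]
    [Category.{v'} D] [HasShift D ℤ] where
  /-- the embedding `Coh(X) → D^b(Coh(X))` -/
  ι : 𝒜 ⥤ D
  /-- the relative Fourier–Mukai transform `Φ` -/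
  Φ : D ⥤ D
  /-- the relative Fourier–Mukai transform `Φ̂` -/
  Φhat : D ⥤ D
  /-- `dim E = dim supp(E)` -/
  dim : 𝒜 → ℕ
  /-- `fdim E = dim π(supp(E))` -/
  fdim : 𝒜 → ℕ
  /-- the transform `Ê` of a WIT sheaf `E` -/
  hat : 𝒜 → 𝒜
  /-- `C20 = 𝒜_h^{≤1}`: pure 1-dimensional sheaves all of whose 1-dimensional
  irreducible components of support meet every fiber of `π` in finitely many
  points -/
  C20 : Set 𝒜
  /-- the Chern character as a `2 × 3` integer matrix (product threefold case) -/
  ch : D → Fin 2 → Fin 3 → ℤ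

namespace EllipticData

variable {D : Type u'} [Category.{v'} D] [HasShift D ℤ]
variable (S : EllipticData 𝒜 D)

/-- `E` is `Φ`-WIT_i : `Φ(E) ≅ F[-i]` for some sheaf `F`.  `W_{i,Φ}`. -/
def WIT (i : ℤ) : Set 𝒜 :=
  {E | ∃ F : 𝒜, Nonempty (S.Φ.obj (S.ι.obj E) ≅ (S.ι.obj F)⟦(-i)⟧)}

/-- `E` is `Φ̂`-WIT_i.  `W_{i,Φ̂}`. -/
def WIThat (i : ℤ) : Set 𝒜 :=
  {E | ∃ F : 𝒜, Nonempty (S.Φhat.obj (S.ι.obj E) ≅ (S.ι.obj F)⟦(-i)⟧)}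

/-- `𝒜_X^{≤ d}`, sheaves of dimension at most `d`. -/
def Adim (d : ℕ) : Set 𝒜 := {E | S.dim E ≤ d}

/-- `𝒜(π)_{≤ e}`, sheaves with `dim π(supp E) ≤ e`;  `Afib 0 = 𝒜(π)_0`. -/
def Afib (e : ℕ) : Set 𝒜 := {E | S.fdim E ≤ e}

/-- `𝒜^d(π)_e = {E : dim E = d, dim π(supp E) = e}`. -/
def Ade (d e : ℕ) : Set 𝒜 := {E | S.dim E = d ∧ S.fdim E = e}

/-- `C_00 = 𝒜_X^{≤0}`. -/
def C00 : Set 𝒜 := S.Adim 0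

/-- `C_10 = {E ∈ 𝒜(π)_0 ∩ W_{0,Φ} : Hom(C_00, E) = 0}`. -/
def C10 : Set 𝒜 :=
  {E | E ∈ S.Afib 0 ∧ E ∈ S.WIT 0 ∧ ∀ A ∈ S.C00, ∀ f : A ⟶ E, f = 0}

/-- `C_11 = {E ∈ 𝒜(π)_0 ∩ W_{1,Φ} : dim Ê = 0}`. -/
def C11 : Set 𝒜 :=
  {E | E ∈ S.Afib 0 ∧ E ∈ S.WIT 1 ∧ S.dim (S.hat E) = 0}

/-- `C_12 = {E ∈ 𝒜(π)_0 ∩ W_{1,Φ} : dim Ê = 1, Hom(C_11, E) = 0}`. -/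
def C12 : Set 𝒜 :=
  {E | E ∈ S.Afib 0 ∧ E ∈ S.WIT 1 ∧ S.dim (S.hat E) = 1 ∧
    ∀ A ∈ S.C11, ∀ f : A ⟶ E, f = 0}

/-- `C_30 = 𝒜^2(π)_1 ∩ W_{0,Φ}`. -/
def C30 : Set 𝒜 := {E | E ∈ S.Ade 2 1 ∧ E ∈ S.WIT 0}

/-- `C_31 = {E ∈ Φ(C_20) : dim E = 2}` (every sheaf in `C_20` is `Φ`-WIT_0). -/
def C31 : Set 𝒜 := {E | S.dim E = 2 ∧ ∃ F ∈ S.C20, Nonempty (S.hat F ≅ E)}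

/-- `C_32 = {E ∈ 𝒜^2(π)_1 ∩ W_{1,Φ} : dim Ê = 2}`. -/
def C32 : Set 𝒜 := {E | E ∈ S.Ade 2 1 ∧ E ∈ S.WIT 1 ∧ S.dim (S.hat E) = 2}

/-- `C_40 = {E ∈ 𝒜^2(π)_2 ∩ W_{0,Φ} : dim Ê = 3}`. -/
def C40 : Set 𝒜 := {E | E ∈ S.Ade 2 2 ∧ E ∈ S.WIT 0 ∧ S.dim (S.hat E) = 3}

/-- `C_50 = 𝒜^3(π)_2 ∩ W_{0,Φ}`. -/
def C50 : Set 𝒜 := {E | E ∈ S.Ade 3 2 ∧ E ∈ S.WIT 0}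

/-- `C_51 = {E ∈ 𝒜^3(π)_2 ∩ W_{1,Φ} : dim Ê = 2}`. -/
def C51 : Set 𝒜 := {E | E ∈ S.Ade 3 2 ∧ E ∈ S.WIT 1 ∧ S.dim (S.hat E) = 2}

/-- `C_52 = {E ∈ 𝒜^3(π)_2 ∩ W_{1,Φ} : dim Ê = 3}`. -/
def C52 : Set 𝒜 := {E | E ∈ S.Ade 3 2 ∧ E ∈ S.WIT 1 ∧ S.dim (S.hat E) = 3}

/-- `𝒯_00 = ⟨C_00⟩`. -/
def T00 : Set 𝒜 := ExtClosure S.C00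
/-- `𝒯_10 = ⟨C_00, C_10⟩`. -/
def T10 : Set 𝒜 := ExtClosure (S.C00 ∪ S.C10)
/-- `𝒯_11 = ⟨𝒯_10, C_11⟩`. -/
def T11 : Set 𝒜 := ExtClosure (S.C00 ∪ S.C10 ∪ S.C11)
/-- `𝒯_12 = ⟨𝒯_11, C_12⟩`. -/
def T12 : Set 𝒜 := ExtClosure (S.C00 ∪ S.C10 ∪ S.C11 ∪ S.C12)
/-- `𝒯_20 = ⟨C_ij : i ≤ 2⟩`. -/
def T20 : Set 𝒜 := ExtClosure (S.C00 ∪ S.C10 ∪ S.C11 ∪ S.C12 ∪ S.C20)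
/-- `𝒯_30 = ⟨𝒯_20, C_30⟩`. -/
def T30 : Set 𝒜 := ExtClosure (S.C00 ∪ S.C10 ∪ S.C11 ∪ S.C12 ∪ S.C20 ∪ S.C30)
/-- `𝒯_31 = ⟨𝒯_30, C_31⟩`. -/
def T31 : Set 𝒜 :=
  ExtClosure (S.C00 ∪ S.C10 ∪ S.C11 ∪ S.C12 ∪ S.C20 ∪ S.C30 ∪ S.C31)
/-- `𝒯_32 = ⟨𝒯_31, C_32⟩`. -/
def T32 : Set 𝒜 :=
  ExtClosure (S.C00 ∪ S.C10 ∪ S.C11 ∪ S.C12 ∪ S.C20 ∪ S.C30 ∪ S.C31 ∪ S.C32)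
/-- `𝒯_40 = ⟨C_ij : i ≤ 4⟩`. -/
def T40 : Set 𝒜 :=
  ExtClosure (S.C00 ∪ S.C10 ∪ S.C11 ∪ S.C12 ∪ S.C20 ∪ S.C30 ∪ S.C31 ∪ S.C32 ∪ S.C40)
/-- `𝒯_50 = ⟨𝒯_40, C_50⟩`. -/
def T50 : Set 𝒜 :=
  ExtClosure (S.C00 ∪ S.C10 ∪ S.C11 ∪ S.C12 ∪ S.C20 ∪ S.C30 ∪ S.C31 ∪ S.C32 ∪ S.C40 ∪ S.C50)
/-- `𝒯_51 = ⟨𝒯_50, C_51⟩`. -/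
def T51 : Set 𝒜 :=
  ExtClosure (S.C00 ∪ S.C10 ∪ S.C11 ∪ S.C12 ∪ S.C20 ∪ S.C30 ∪ S.C31 ∪ S.C32 ∪ S.C40 ∪ S.C50 ∪ S.C51)
/-- `𝒯_52 = ⟨𝒯_51, C_52⟩`. -/
def T52 : Set 𝒜 :=
  ExtClosure (S.C00 ∪ S.C10 ∪ S.C11 ∪ S.C12 ∪ S.C20 ∪ S.C30 ∪ S.C31 ∪ S.C32 ∪ S.C40 ∪ S.C50 ∪ S.C51 ∪ S.C52)
/-- `ℱ_2 = ⟨C_00, C_10, C_20⟩`. -/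
def F2 : Set 𝒜 := ExtClosure (S.C00 ∪ S.C10 ∪ S.C20)
/-- `ℱ_3 = ⟨C_00, C_10, C_20, C_30⟩`. -/
def F3 : Set 𝒜 := ExtClosure (S.C00 ∪ S.C10 ∪ S.C20 ∪ S.C30)
/-- `ℱ_4 = ⟨C_00, …, C_40⟩`. -/
def F4 : Set 𝒜 := ExtClosure (S.C00 ∪ S.C10 ∪ S.C20 ∪ S.C30 ∪ S.C40)
/-- `ℱ_5 = ⟨C_00, …, C_50⟩`. -/
def F5 : Set 𝒜 := ExtClosure (S.C00 ∪ S.C10 ∪ S.C20 ∪ S.C30 ∪ S.C40 ∪ S.C50)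

end EllipticData

/-- The axioms (`Properties') of a Weierstraß elliptic threefold `π : X → B`,
following Angeles–Lo–van der Linden, Section 3. -/
structure EllipticAxioms {D : Type u'} [Category.{v'} D] [HasShift D ℤ]
    (S : EllipticData 𝒜 D) : Prop where
  /-- `Coh(X)` is noetherian. -/
  noetherian : ∀ E : 𝒜, WellFoundedGT (Subobject E)
  /-- `X` is a threefold. -/
  dim_le_three : ∀ E : 𝒜, S.dim E ≤ 3
  /-- `B` is a surface. -/
  fdim_le_two : ∀ E : 𝒜, S.fdim E ≤ 2
  /-- Property D2 (first part): `dim π(supp E) ≤ dim E`. -/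
  fdim_le_dim : ∀ E : 𝒜, S.fdim E ≤ S.dim E
  /-- Property D2 (second part; `π` is flat of relative dimension 1). -/
  dim_le_fdim_add_one : ∀ E : 𝒜, S.dim E ≤ S.fdim E + 1
  /-- Property D1: `dim B = max (dim A) (dim C)` in a short exact sequence. -/
  dim_ses : ∀ {A B C : 𝒜} (f : A ⟶ B) (g : B ⟶ C),
    IsShortExact f g → S.dim B = max (S.dim A) (S.dim C)
  /-- Property D3: the analogue of D1 for `dim π(supp -)`. -/
  fdim_ses : ∀ {A B C : 𝒜} (f : A ⟶ B) (g : B ⟶ C),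
    IsShortExact f g → S.fdim B = max (S.fdim A) (S.fdim C)
  /-- Property A2: `Φ̂ ∘ Φ ≅ id[-1]`. -/
  comp₁ : Nonempty (S.Φ ⋙ S.Φhat ≅ shiftFunctor D (-1 : ℤ))
  /-- Property A2: `Φ ∘ Φ̂ ≅ id[-1]`. -/
  comp₂ : Nonempty (S.Φhat ⋙ S.Φ ≅ shiftFunctor D (-1 : ℤ))
  /-- `hat E` is a transform of the `Φ`-WIT_i sheaf `E`. -/
  hat_spec : ∀ (i : ℤ), ∀ E ∈ S.WIT i,
    Nonempty (S.Φ.obj (S.ι.obj E) ≅ (S.ι.obj (S.hat E))⟦(-i)⟧)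
  /-- Property A3: `dim π(supp E) = dim π(supp ΦE)`. -/
  a3 : ∀ (E F : 𝒜) (i : ℤ),
    Nonempty (S.Φ.obj (S.ι.obj E) ≅ (S.ι.obj F)⟦(-i)⟧) → S.fdim F = S.fdim E
  /-- Property TC1: each `𝒜_X^{≤ d}` is a Serre subcategory. -/
  tc1 : ∀ d : ℕ, IsSerre (S.Adim d)
  /-- Property TC2: each `𝒜(π)_{≤ e}` is a Serre subcategory. -/
  tc2 : ∀ e : ℕ, IsSerre (S.Afib e)
  /-- Property TC3: `(W_{0,Φ}, W_{1,Φ})` is a torsion pair in `Coh(X)`. -/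
  tc3 : IsTorsionPair (S.WIT 0) (S.WIT 1)
  /-- Property C0: `C_00 ⊆ W_{0,Φ}`. -/
  c0 : S.C00 ⊆ S.WIT 0
  /-- Property C1: `C_20 ⊆ W_{0,Φ}`. -/
  c1 : S.C20 ⊆ S.WIT 0
  /-- Sheaves in `C_20` are 1-dimensional with 1-dimensional image under `π`. -/
  c20_dim : ∀ E ∈ S.C20, S.dim E = 1 ∧ S.fdim E = 1
  /-- Properties Z1, Z2, D1: a 1-dimensional quotient of a horizontal sheaf is
  horizontal. -/
  c20_quot : ∀ E ∈ S.C20, ∀ E' : 𝒜, IsQuotient E E' → S.dim E' = 1 → E' ∈ S.C20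
  /-- Properties Z1, Z2: every sheaf of dimension ≤ 1 is an extension of a
  fiber sheaf by a sheaf in `C_00 ∪ C_20`. -/
  hv_decomp : ∀ E ∈ S.Adim 1, ∃ (Eh Ev : 𝒜) (f : Eh ⟶ E) (g : E ⟶ Ev),
    IsShortExact f g ∧ Eh ∈ S.C00 ∪ S.C20 ∧ Ev ∈ S.Afib 0

/-- The extra axioms available when `X = C × B` is the product of a smooth
elliptic curve `C` and a K3 surface `B` of Picard rank one, with `π` the
second projection (Properties CH1p, CH2p, CH3p, A4p). -/
structure ProductAxioms {D : Type u'} [Category.{v'} D] [HasShift D ℤ]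
    (S : EllipticData 𝒜 D) : Prop where
  /-- Property CH1p: `codim E = min {i + j : α_ij ≠ 0}` for a nonzero sheaf. -/
  ch1p : ∀ E : 𝒜, ¬ IsZero E →
    3 - S.dim E =
      sInf {n : ℕ | ∃ (i : Fin 2) (j : Fin 3),
        (i : ℕ) + (j : ℕ) = n ∧ S.ch (S.ι.obj E) i j ≠ 0}
  /-- Property CH2p: `dim π(supp E) = max {2 - j : α_1j ≠ 0}`. -/
  ch2p : ∀ E : 𝒜, ¬ IsZero E →
    S.fdim E = sSup {n : ℕ | ∃ j : Fin 3, 2 - (j : ℕ) = n ∧ S.ch (S.ι.obj E) 1 j ≠ 0}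
  /-- Property CH3p: `∑_{i+j = codim E} α_ij > 0` for a nonzero sheaf. -/
  ch3p : ∀ E : 𝒜, ¬ IsZero E →
    0 < ∑ i : Fin 2, ∑ j : Fin 3,
      (if (i : ℕ) + (j : ℕ) = 3 - S.dim E then S.ch (S.ι.obj E) i j else 0)
  /-- Property A4p: `ch(ΦE)` is obtained from `ch(E)` by a signed row swap. -/
  a4p_phi : ∀ Z : D,
    (∀ j : Fin 3, S.ch (S.Φ.obj Z) 0 j = S.ch Z 1 j) ∧
    (∀ j : Fin 3, S.ch (S.Φ.obj Z) 1 j = - S.ch Z 0 j)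
  /-- Property A4p: `ch(E[1]) = - ch(E)`. -/
  a4p_shift : ∀ Z : D, ∀ (i : Fin 2) (j : Fin 3),
    S.ch (Z⟦(1 : ℤ)⟧) i j = - S.ch Z i j

end EllipticFramework

/-!
In a noetherian abelian category, a class `𝒯` containing `0` and closed under quotients and
extensions is a torsion class. The torsion part of `E` is a maximal subobject `A ⊆ E` lying in
`𝒯`. If some `T ∈ 𝒯` had a nonzero map `f` to `E / A`, then the preimage of `im f` in `E` would
be an extension of `im f` by `A`, hence a strictly larger subobject in `𝒯`.

An extension closure is closed under quotients as soon as the quotients of its generators lie in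
it, and a quotient of a sheaf in `C_00 ∪ C_20` is again in `C_00 ∪ C_20`: its dimension can only
drop, and a 1-dimensional quotient of a horizontal sheaf is horizontal.
-/

namespace EllipticFramework

variable {𝒜 : Type u} [Category.{v} 𝒜] [Abelian 𝒜]

lemma isShortExact_cokernel_π {A B : 𝒜} (f : A ⟶ B) [Mono f] :
    IsShortExact f (cokernel.π f) :=
  ⟨cokernel.condition f, { exact := ShortComplex.exact_of_g_is_cokernel _ (cokernelIsCokernel f) }⟩

lemma isShortExact_kernel_ι {A B : 𝒜} (g : A ⟶ B) [Epi g] :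
    IsShortExact (kernel.ι g) g :=
  ⟨kernel.condition g, { exact := ShortComplex.exact_of_f_is_kernel _ (kernelIsKernel g) }⟩

def IsClosedUnderQuotients (𝒯 : Set 𝒜) : Prop :=
  ∀ ⦃X Y : 𝒜⦄ (p : X ⟶ Y), Epi p → X ∈ 𝒯 → Y ∈ 𝒯

def IsClosedUnderExtensions (𝒯 : Set 𝒜) : Prop :=
  ∀ ⦃X Y Z : 𝒜⦄ (f : X ⟶ Y) (g : Y ⟶ Z), IsShortExact f g → X ∈ 𝒯 → Z ∈ 𝒯 → Y ∈ 𝒯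

section TorsionClass

variable {𝒯 : Set 𝒜}

/-- The pullback is an extension of `I` by `kernel (pullback.snd q m) ≅ kernel q`. -/
lemma pullback_mem (hquot : IsClosedUnderQuotients 𝒯) (hext : IsClosedUnderExtensions 𝒯)
    {E Q I : 𝒜} (q : E ⟶ Q) [Epi q] (m : I ⟶ Q) (hker : kernel q ∈ 𝒯) (hI : I ∈ 𝒯) :
    pullback q m ∈ 𝒯 := by
  have := isIso_kernel_map_of_isPullback (IsPullback.of_hasPullback q m).flip
  refine hext _ _ (isShortExact_kernel_ι (pullback.snd q m)) ?_ hI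
  exact hquot (inv (kernel.map _ _ _ _ (IsPullback.of_hasPullback q m).flip.w))
    inferInstance hker

lemma eq_zero_of_maximal_subobject (hquot : IsClosedUnderQuotients 𝒯)
    (hext : IsClosedUnderExtensions 𝒯) {E : 𝒜} {A : Subobject E}
    (hA : Maximal (fun B : Subobject E ↦ (B : 𝒜) ∈ 𝒯) A)
    {T : 𝒜} (hT : T ∈ 𝒯) (f : T ⟶ cokernel A.arrow) : f = 0 := by
  set q := cokernel.π A.arrow
  obtain ⟨_, hses⟩ := isShortExact_cokernel_π A.arrow
  have hker : kernel q ∈ 𝒯 := hquot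
    (IsLimit.conePointUniqueUpToIso hses.fIsKernel (kernelIsKernel q)).hom inferInstance hA.prop
  have hpb : pullback q (image.ι f) ∈ 𝒯 :=
    pullback_mem hquot hext q _ hker (hquot (factorThruImage f) inferInstance hT)
  have hle : A ≤ Subobject.mk (pullback.fst q (image.ι f)) :=
    Subobject.le_mk_of_comm (pullback.lift A.arrow 0 (by simp [q])) (pullback.lift_fst _ _ _)
  have hge := hA.2 (hquot (Subobject.underlyingIso _).inv inferInstance hpb) hle
  have hfst : pullback.fst q (image.ι f) ≫ q = 0 := by
    rw [← Subobject.underlyingIso_arrow (pullback.fst q _), ← Subobject.ofLE_arrow hge]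
    simp only [Category.assoc, q, cokernel.condition, comp_zero]
  have hsnd : pullback.snd q (image.ι f) = 0 := by
    rw [← cancel_mono (image.ι f), zero_comp, ← pullback.condition, hfst]
  rw [← image.fac f, (IsZero.of_epi_eq_zero _ hsnd).eq_of_src (image.ι f) 0, comp_zero]

theorem isTorsionClass_of_isClosedUnder (noetherian : ∀ E : 𝒜, WellFoundedGT (Subobject E))
    (zero_mem : ∀ ⦃X : 𝒜⦄, IsZero X → X ∈ 𝒯) (hquot : IsClosedUnderQuotients 𝒯)
    (hext : IsClosedUnderExtensions 𝒯) : IsTorsionClass 𝒯 := by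
  refine ⟨{Q | ∀ ⦃T : 𝒜⦄, T ∈ 𝒯 → ∀ f : T ⟶ Q, f = 0}, fun _ hT _ hQ f ↦ hQ hT f, fun E ↦ ?_⟩
  obtain ⟨A, hA⟩ := (noetherian E).exists_maximal {B : Subobject E | (B : 𝒜) ∈ 𝒯}
    ⟨⊥, zero_mem ((isZero_zero 𝒜).of_iso Subobject.botCoeIsoZero)⟩
  exact ⟨A, cokernel A.arrow, A.arrow, cokernel.π A.arrow, hA.prop,
    fun _ hT f ↦ eq_zero_of_maximal_subobject hquot hext hA hT f,
    isShortExact_cokernel_π A.arrow⟩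

end TorsionClass

/-- A quotient `B ↠ B'` of an extension `0 → A → B → C → 0` is an extension of a quotient of `C`
by the image of `A`. -/
theorem ExtClosure.isClosedUnderQuotients {T : Set 𝒜}
    (hT : ∀ ⦃X Y : 𝒜⦄ (p : X ⟶ Y), Epi p → X ∈ T → ExtClosure T Y) :
    IsClosedUnderQuotients (ExtClosure T) := by
  intro X Y p hp hX
  induction hX generalizing Y with
  | of hX => exact hT p hp hX
  | zero hX => exact .zero (hX.of_epi p)
  | @ext A B C f g hfg _ _ ihA ihC =>
    obtain ⟨_, hses⟩ := hfg
    obtain ⟨q, hq⟩ := CokernelCofork.IsColimit.desc' hses.gIsCokernel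
      (p ≫ cokernel.π (image.ι (f ≫ p)))
      (by rw [← Category.assoc, ← image.fac_assoc (f ≫ p), cokernel.condition, comp_zero])
    exact .ext _ _ (isShortExact_cokernel_π (image.ι (f ≫ p)))
      (ihA (factorThruImage (f ≫ p)) inferInstance) (ihC q (epi_of_epi_fac hq))

namespace EllipticAxioms

variable {D : Type u'} [Category.{v'} D] [HasShift D ℤ] {S : EllipticData 𝒜 D}

lemma dim_le_of_epi (hS : EllipticAxioms S) {E E' : 𝒜} (p : E ⟶ E') [Epi p] :
    S.dim E' ≤ S.dim E := by
  rw [hS.dim_ses _ _ (isShortExact_kernel_ι p)]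
  exact le_max_right _ _

lemma mem_C00_union_C20_of_epi (hS : EllipticAxioms S) {E E' : 𝒜} (p : E ⟶ E') [Epi p]
    (hE : E ∈ S.C00 ∪ S.C20) : E' ∈ S.C00 ∪ S.C20 := by
  have hle := hS.dim_le_of_epi p
  rcases hE with h0 | h2
  · exact .inl (hle.trans h0)
  · rcases (hle.trans_eq (hS.c20_dim E h2).1).eq_or_lt with h1 | h0
    · exact .inr (hS.c20_quot E h2 E' ⟨p, inferInstance⟩ h1)
    · exact .inl (Nat.lt_one_iff.mp h0).le

end EllipticAxioms

/-- Lemma 4.8.  The extension closure `⟨C_00, C_20⟩` of the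
0-dimensional sheaves together with the 1-dimensional sheaves with horizontal
support is a torsion class in `Coh(X)`. -/
theorem C00_C20_torsion_class {𝒜 : Type u} {D : Type u'} [Category.{v} 𝒜]
    [Abelian 𝒜] [Category.{v'} D] [HasShift D ℤ] (S : EllipticData 𝒜 D)
    (hS : EllipticAxioms S) :
    IsTorsionClass (ExtClosure (S.C00 ∪ S.C20)) :=
  isTorsionClass_of_isClosedUnder hS.noetherian (fun _ ↦ .zero)
    (ExtClosure.isClosedUnderQuotients fun _ _ p _ hX ↦
      .of (hS.mem_C00_union_C20_of_epi p hX))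
    (fun _ _ _ f g hfg hX hZ ↦ .ext f g hfg hX hZ)

end EllipticFramework
end

section
/- Let 1 ≤ m ≤ 3 be an integer and let E ∈ A^m(π)_{m-1} ∩ W_{0,Φ}. Then for any quotient E ↠ E' in Coh(X) with dim E' = m, we have E' ∈ A^m(π)_{m-1} ∩ W_{0,Φ}. -/
/-!
A framework for torsion theory computations on elliptic threefolds
(following Angeles–Lo–van der Linden).

We axiomatize the setting of a Weierstraß elliptic threefold `π : X → B`:
`𝒜` plays the role of the abelian category `Coh(X)`, `D` plays the role of
the bounded derived category `D^b(Coh(X))` (a category with a shift by `ℤ`),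
`ι : 𝒜 ⥤ D` is the canonical embedding, `Φ, Φhat` are the relative
Fourier–Mukai autoequivalences, `dim E` is the dimension of `supp E`,
`fdim E` is the dimension of `π(supp E)`, `hat` is the Fourier–Mukai
transform of a WIT sheaf, `C20` is the class of pure 1-dimensional sheaves
with horizontal support, and `ch` is the Chern character (as a 2 × 3 integer
matrix, for the product threefold `X = C × B`).

The paper's `Properties' (D0–D3, Z1–Z2, A1–A4, TC1–TC3, C0–C1, CH0p–CH3p,
A4p) are encoded in the axiom structures `EllipticAxioms` (general
Weierstraß threefolds) and `ProductAxioms` (the product of an elliptic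
curve and a K3 surface of Picard rank one).
-/

open CategoryTheory CategoryTheory.Limits

universe v v' u u'

namespace EllipticFramework

/-!
Quotients can only shrink `π(supp -)`, so `fdim E' ≤ m - 1`, while `dim E' ≤ fdim E' + 1`
forces `fdim E' ≥ m - 1`. Being the torsion class of a torsion pair, `W_{0,Φ}` is closed
under quotients: the torsion-free part of `E'` receives the zero map from `E`, hence vanishes.
-/

section

variable {𝒜 : Type u} [Category.{v} 𝒜] [Abelian 𝒜]

lemma isShortExact_kernel_ι_s9 {E E' : 𝒜} (q : E ⟶ E') [Epi q] :
    IsShortExact (kernel.ι q) q :=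
  ⟨kernel.condition q, { exact := ShortComplex.exact_of_f_is_kernel _ (kernelIsKernel q) }⟩

lemma IsTorsionPair.exists_iso_of_epi {T F : Set 𝒜} (h : IsTorsionPair T F) {E E' : 𝒜}
    (hE : E ∈ T) (q : E ⟶ E') [Epi q] : ∃ A ∈ T, Nonempty (A ≅ E') := by
  obtain ⟨A, C, f, g, hA, hC, _, hfg⟩ := h.2 E'
  have hg : g = 0 := (cancel_epi q).1 (by rw [comp_zero]; exact h.1 hE hC (q ≫ g))
  have := hfg.mono_f
  have : Epi f := hfg.exact.epi_f hg
  have : IsIso f := isIso_of_mono_of_epi f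
  exact ⟨A, hA, ⟨asIso f⟩⟩

variable {D : Type u'} [Category.{v'} D] [HasShift D ℤ] {S : EllipticData 𝒜 D}

lemma EllipticData.mem_WIT_of_iso {i : ℤ} {E E' : 𝒜} (e : E ≅ E') (hE : E ∈ S.WIT i) :
    E' ∈ S.WIT i := by
  obtain ⟨F, ⟨φ⟩⟩ := hE
  exact ⟨F, ⟨(S.Φ.mapIso (S.ι.mapIso e)).symm ≪≫ φ⟩⟩

lemma EllipticAxioms.fdim_le_of_epi (hS : EllipticAxioms S) {E E' : 𝒜} (q : E ⟶ E') [Epi q] :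
    S.fdim E' ≤ S.fdim E :=
  (hS.fdim_ses _ q (isShortExact_kernel_ι_s9 q)).ge.trans' (le_max_right _ _)

lemma EllipticAxioms.mem_WIT_zero_of_epi (hS : EllipticAxioms S) {E E' : 𝒜} (hE : E ∈ S.WIT 0)
    (q : E ⟶ E') [Epi q] : E' ∈ S.WIT 0 := by
  obtain ⟨A, hA, ⟨e⟩⟩ := hS.tc3.exists_iso_of_epi hE q
  exact EllipticData.mem_WIT_of_iso e hA

end

theorem quotient_in_Ade_general {𝒜 : Type u} {D : Type u'} [Category.{v} 𝒜] [Abelian 𝒜]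
    [Category.{v'} D] [HasShift D ℤ] (S : EllipticData 𝒜 D)
    (hS : EllipticAxioms S) (m : ℕ)
    (E : 𝒜) (hE : E ∈ S.Ade m (m - 1) ∩ S.WIT 0)
    (E' : 𝒜) (hq : IsQuotient E E') (hd : S.dim E' = m) :
    E' ∈ S.Ade m (m - 1) ∩ S.WIT 0 := by
  obtain ⟨⟨-, hfdimE⟩, hW0⟩ := hE
  obtain ⟨q, _⟩ := hq
  have hfd : S.fdim E' = m - 1 := by
    have := hS.fdim_le_of_epi q
    have := hS.dim_le_fdim_add_one E'
    omega
  exact ⟨⟨hd, hfd⟩, hS.mem_WIT_zero_of_epi hW0 q⟩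

/-- Lemma 4.13.  Let `1 ≤ m ≤ 3` and
`E ∈ 𝒜^m(π)_{m-1} ∩ W_{0,Φ}`.  Then for any quotient `E ↠ E'` in `Coh(X)`
with `dim E' = m`, we have `E' ∈ 𝒜^m(π)_{m-1} ∩ W_{0,Φ}`. -/
theorem quotient_in_Ade {𝒜 : Type u} {D : Type u'} [Category.{v} 𝒜] [Abelian 𝒜]
    [Category.{v'} D] [HasShift D ℤ] (S : EllipticData 𝒜 D)
    (hS : EllipticAxioms S) (m : ℕ) (hm1 : 1 ≤ m) (hm3 : m ≤ 3)
    (E : 𝒜) (hE : E ∈ S.Ade m (m - 1) ∩ S.WIT 0)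
    (E' : 𝒜) (hq : IsQuotient E E') (hd : S.dim E' = m) :
    E' ∈ S.Ade m (m - 1) ∩ S.WIT 0 :=
  quotient_in_Ade_general S hS m E hE E' hq hd

end EllipticFramework
end
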